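/- arXiv:math/0204263 — 2 statements merged into one kernel-verified Lean document; each statement's English description precedes it below -/
import Mathlib

section
/- Combining the previous two results: if ρ : [0,∞) → ℝ^d solves ρ_i'(t) = ∑_{r ≠ i} (λ_{ri}·π_r(t)/π_i(t))·(ρ_r(t) − ρ_i(t)) with λ_{pq} > 0 for p ≠ q and π(t) strictly positive and continuous, and initially max_i ρ_i(0) − min_i ρ_i(0) ≤ 1, then for all t ≥ 0 and all i, k: |ρ_i(t) − ρ_k(t)| ≤ exp(−2·min_{p≠q} sqrt(λ_{pq}·λ_{qp})·t). -/
/-!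
The spread `W(t) = maxᵢ ρᵢ(t) − minᵢ ρᵢ(t)` is the maximum of the finitely many differentiable
functions `ρᵢ − ρₖ`. At a pair `(i, k)` realising it, `i` is a maximiser and `k` a minimiser of
`ρ(t)`, so every term of `ρᵢ'` is `≤ 0` and every term of `ρₖ'` is `≥ 0`. Keeping only the
`r = k` and `r = i` terms gives `(ρᵢ − ρₖ)' ≤ −(aₖᵢ + aᵢₖ)(ρᵢ − ρₖ)` with `aᵣᵢ = λᵣᵢ πᵣ / πᵢ`,
and since `aₖᵢ aᵢₖ = λₖᵢ λᵢₖ` no longer depends on `π`, AM–GM bounds the rate below by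
`2 √(λₖᵢ λᵢₖ)`. A bound on the derivatives of the active functions bounds the right Dini
derivative of their maximum, so Grönwall's inequality yields `W(t) ≤ W(0) e^{−2κt}`.
-/

open Filter Topology Finset

theorem Real.two_mul_sqrt_mul_le_add {a b : ℝ} (ha : 0 ≤ a) (hb : 0 ≤ b) :
    2 * √(a * b) ≤ a + b :=
  calc 2 * √(a * b) = 2 * √a * √b := by rw [Real.sqrt_mul ha, mul_assoc]
    _ ≤ √a ^ 2 + √b ^ 2 := two_mul_le_add_sq _ _
    _ = a + b := by rw [Real.sq_sqrt ha, Real.sq_sqrt hb]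

namespace Finset

variable {ι : Type*} {s : Finset ι} (hs : s.Nonempty)

theorem eventually_slope_sup'_lt {f : ι → ℝ → ℝ} {f' : ι → ℝ} {x r : ℝ}
    (hf : ∀ q ∈ s, HasDerivWithinAt (f q) (f' q) (Set.Ioi x) x)
    (hr : ∀ q ∈ s, f q x = s.sup' hs (f · x) → f' q < r) :
    ∀ᶠ z in 𝓝[>] x, slope (fun y => s.sup' hs (f · y)) x z < r := by
  set M := s.sup' hs (f · x)
  have hbound : ∀ q ∈ s, ∀ᶠ z in 𝓝[>] x, f q z - M < r * (z - x) := by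
    intro q hq
    rcases (le_sup' (f · x) hq).lt_or_eq with hlt | hact
    · have hcont : ContinuousWithinAt (fun z => f q z - r * (z - x)) (Set.Ioi x) x :=
        (hf q hq).continuousWithinAt.sub (by fun_prop)
      have hlim := hcont.tendsto
      simp only [sub_self, mul_zero, sub_zero] at hlim
      filter_upwards [hlim.eventually_lt_const hlt] with z hz
      linarith
    · filter_upwards [(hf q hq).limsup_slope_le' (lt_irrefl x) (hr q hq hact),
        self_mem_nhdsWithin] with z hz (hzx : x < z)
      rwa [slope_def_field, div_lt_iff₀ (sub_pos.2 hzx), hact] at hz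
  filter_upwards [(eventually_all_finset s).2 hbound, self_mem_nhdsWithin]
    with z hz (hzx : x < z)
  rw [slope_def_field, div_lt_iff₀ (sub_pos.2 hzx), sub_lt_iff_lt_add]
  exact (sup'_lt_iff hs).2 fun q hq => by linarith [hz q hq]

theorem sup'_le_mul_exp_of_hasDerivAt {f f' : ι → ℝ → ℝ} {K : ℝ}
    (hf : ∀ q ∈ s, ∀ x, 0 ≤ x → HasDerivAt (f q) (f' q x) x)
    (hact : ∀ q ∈ s, ∀ x, 0 ≤ x → f q x = s.sup' hs (f · x) →
      f' q x ≤ K * s.sup' hs (f · x))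
    {t : ℝ} (ht : 0 ≤ t) :
    s.sup' hs (f · t) ≤ s.sup' hs (f · 0) * Real.exp (K * t) := by
  set W := fun y => s.sup' hs (f · y)
  have hcont : ContinuousOn W (Set.Icc 0 t) := fun x hx =>
    (ContinuousAt.finset_sup'_apply hs fun q hq =>
      (hf q hq x hx.1).continuousAt).continuousWithinAt
  have hslope : ∀ x ∈ Set.Ico 0 t, ∀ r, K * W x < r →
      ∃ᶠ z in 𝓝[>] x, (z - x)⁻¹ * (W z - W x) < r := fun x hx r hr =>
    (eventually_slope_sup'_lt hs (fun q hq => (hf q hq x hx.1).hasDerivWithinAt)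
      fun q hq hq' => (hact q hq x hx.1 hq').trans_lt hr).frequently
  have hW := le_gronwallBound_of_liminf_deriv_right_le hcont hslope le_rfl
    (fun x _ => (add_zero _).ge) t ⟨ht, le_rfl⟩
  rwa [gronwallBound_ε0, sub_zero] at hW

end Finset

section Wonham

variable {ι : Type*} [Fintype ι]

noncomputable def spread [Nonempty ι] (v : ι → ℝ) : ℝ :=
  univ.sup' univ_nonempty fun q : ι × ι => v q.1 - v q.2

variable [DecidableEq ι] {lam : ι → ι → ℝ} {p v : ι → ℝ} {i k : ι}

noncomputable def wonhamDrift (lam : ι → ι → ℝ) (p v : ι → ℝ) (i : ι) : ℝ :=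
  ∑ r ∈ univ.erase i, lam r i * p r / p i * (v r - v i)

theorem wonhamDrift_le_of_forall_le (hlam : ∀ p q, p ≠ q → 0 ≤ lam p q) (hp : ∀ j, 0 ≤ p j)
    (hmax : ∀ r, v r ≤ v i) (hki : k ≠ i) :
    wonhamDrift lam p v i ≤ lam k i * p k / p i * (v k - v i) := by
  rw [wonhamDrift, ← add_sum_erase _ _ (mem_erase.2 ⟨hki, mem_univ k⟩)]
  refine add_le_of_nonpos_right (sum_nonpos fun r hr => ?_)
  have hri := (mem_erase.1 (mem_erase.1 hr).2).1
  exact mul_nonpos_of_nonneg_of_nonpos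
    (div_nonneg (mul_nonneg (hlam r i hri) (hp r)) (hp i)) (sub_nonpos.2 (hmax r))

theorem le_wonhamDrift_of_forall_le (hlam : ∀ p q, p ≠ q → 0 ≤ lam p q) (hp : ∀ j, 0 ≤ p j)
    (hmin : ∀ r, v k ≤ v r) (hik : i ≠ k) :
    lam i k * p i / p k * (v i - v k) ≤ wonhamDrift lam p v k := by
  rw [wonhamDrift, ← add_sum_erase _ _ (mem_erase.2 ⟨hik, mem_univ i⟩)]
  refine le_add_of_nonneg_right (sum_nonneg fun r hr => ?_)
  have hrk := (mem_erase.1 (mem_erase.1 hr).2).1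
  exact mul_nonneg
    (div_nonneg (mul_nonneg (hlam r k hrk) (hp r)) (hp k)) (sub_nonneg.2 (hmin r))

theorem wonhamDrift_sub_wonhamDrift_le (hlam : ∀ p q, p ≠ q → 0 ≤ lam p q)
    (hp : ∀ j, 0 < p j) (hmax : ∀ r, v r ≤ v i) (hmin : ∀ r, v k ≤ v r) (hik : i ≠ k) :
    wonhamDrift lam p v i - wonhamDrift lam p v k
      ≤ -(2 * √(lam k i * lam i k)) * (v i - v k) := by
  have hp' : ∀ j, 0 ≤ p j := fun j => (hp j).le
  have hweights : lam k i * p k / p i * (lam i k * p i / p k) = lam k i * lam i k := by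
    field_simp [(hp i).ne', (hp k).ne']
  have hamgm : 2 * √(lam k i * lam i k) ≤ lam k i * p k / p i + lam i k * p i / p k := by
    rw [← hweights]
    exact Real.two_mul_sqrt_mul_le_add
      (div_nonneg (mul_nonneg (hlam k i hik.symm) (hp' k)) (hp' i))
      (div_nonneg (mul_nonneg (hlam i k hik) (hp' i)) (hp' k))
  have hi := wonhamDrift_le_of_forall_le hlam hp' hmax hik.symm
  have hk := le_wonhamDrift_of_forall_le hlam hp' hmin hik
  nlinarith [sub_nonneg.2 (hmax k)]

theorem wonhamDrift_sub_le_of_eq_spread [Nonempty ι] (hlam : ∀ p q, p ≠ q → 0 ≤ lam p q)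
    (hp : ∀ j, 0 < p j) {κ : ℝ} (hκ : ∀ p q, p ≠ q → κ ≤ √(lam p q * lam q p))
    (hik : v i - v k = spread v) :
    wonhamDrift lam p v i - wonhamDrift lam p v k ≤ -(2 * κ) * (v i - v k) := by
  have hle : ∀ a b, v a - v b ≤ v i - v k := fun a b =>
    hik ▸ le_sup' (fun q : ι × ι => v q.1 - v q.2) (mem_univ (a, b))
  rcases eq_or_ne i k with rfl | hne
  · simp
  calc _ ≤ -(2 * √(lam k i * lam i k)) * (v i - v k) :=
        wonhamDrift_sub_wonhamDrift_le hlam hp (fun r => by linarith [hle r k])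
          (fun r => by linarith [hle i r]) hne
    _ ≤ -(2 * κ) * (v i - v k) :=
        mul_le_mul_of_nonneg_right (by linarith [hκ k i hne.symm]) (by linarith [hle k k])

theorem abs_sub_le_spread_mul_exp_of_wonham [Nonempty ι] (hlam : ∀ p q, p ≠ q → 0 ≤ lam p q)
    {π : ℝ → ι → ℝ} (hπ : ∀ t j, 0 < π t j) {ρ : ℝ → ι → ℝ}
    (hode : ∀ j t, 0 ≤ t → HasDerivAt (fun s => ρ s j) (wonhamDrift lam (π t) (ρ t) j) t)
    {κ : ℝ} (hκ : ∀ p q, p ≠ q → κ ≤ √(lam p q * lam q p)) {t : ℝ} (ht : 0 ≤ t) (i k : ι) :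
    |ρ t i - ρ t k| ≤ spread (ρ 0) * Real.exp (-(2 * κ) * t) := by
  have hspread : spread (ρ t) ≤ spread (ρ 0) * Real.exp (-(2 * κ) * t) :=
    sup'_le_mul_exp_of_hasDerivAt univ_nonempty (f := fun (q : ι × ι) s => ρ s q.1 - ρ s q.2)
      (fun q _ x hx => (hode q.1 x hx).sub (hode q.2 x hx))
      (fun _ _ x _ hq => by
        rw [← hq]; exact wonhamDrift_sub_le_of_eq_spread hlam (hπ x) hκ hq) ht
  exact abs_sub_le_iff.2
    ⟨(le_sup' (fun q : ι × ι => ρ t q.1 - ρ t q.2) (mem_univ (i, k))).trans hspread,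
      (le_sup' (fun q : ι × ι => ρ t q.1 - ρ t q.2) (mem_univ (k, i))).trans hspread⟩

end Wonham

open Finset in
/-- Key lemma (Lemma 2.3 of Chigansky–Liptser, deterministic form): if `ρ` solves
`ρ_i' = ∑_{r≠i} (λ_{ri}·π_r/π_i)·(ρ_r − ρ_i)` with `λ_{pq} > 0` for `p ≠ q`, `π`
strictly positive and continuous, and the initial oscillation is at most `1`, then
`|ρ_i(t) − ρ_k(t)| ≤ exp(−2·min_{p≠q} sqrt(λ_{pq}·λ_{qp})·t)` for all `t ≥ 0`. -/
theorem wonham_key_lemma {d : ℕ} (hd : 2 ≤ d) (lam : Fin d → Fin d → ℝ)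
    (hlam : ∀ p q, p ≠ q → 0 < lam p q) (π : ℝ → Fin d → ℝ)
    (hπpos : ∀ t i, 0 < π t i)
    (ρ : ℝ → Fin d → ℝ)
    (hode : ∀ i t, 0 ≤ t →
      HasDerivAt (fun s => ρ s i)
        (∑ r ∈ Finset.univ.erase i, lam r i * π t r / π t i * (ρ t r - ρ t i)) t)
    (hinit : ∀ i k, ρ 0 i - ρ 0 k ≤ 1) :
    ∀ t, 0 ≤ t → ∀ i k : Fin d,
      |ρ t i - ρ t k|
        ≤ Real.exp (-(2 * ((Finset.univ.filter (fun pq : Fin d × Fin d => pq.1 ≠ pq.2)).inf'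
            ⟨(⟨0, by omega⟩, ⟨1, by omega⟩), by simp [Fin.ext_iff]⟩
            (fun pq => Real.sqrt (lam pq.1 pq.2 * lam pq.2 pq.1)))) * t) := by
  intro t ht i k
  have : Nonempty (Fin d) := ⟨⟨0, by omega⟩⟩
  have hspread : spread (ρ 0) ≤ 1 := sup'_le _ _ fun q _ => hinit q.1 q.2
  calc |ρ t i - ρ t k| ≤ spread (ρ 0) * Real.exp _ :=
        abs_sub_le_spread_mul_exp_of_wonham (fun p q h => (hlam p q h).le) hπpos hode
          (fun p q h => inf'_le (fun pq : Fin d × Fin d => √(lam pq.1 pq.2 * lam pq.2 pq.1))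
            (mem_filter.2 ⟨mem_univ (p, q), h⟩)) ht i k
    _ ≤ _ := mul_le_of_le_one_left (Real.exp_pos _).le hspread
end

section
/- Deterministic version of Theorem 1 (main bound): under the above setup with weights w_j = β_j/ν_j > 0 define π^β_i = (∑_j w_j A_{ji})/(∑_j w_j q_j). Then ∑_i |m_i − π^β_i| ≤ d²·(max_j w_j)·(max_j 1/w_j)·max_{i,j,k} |ρ_{ji} − ρ_{jk}|, where ρ_{ji} = A_{ji}/m_i. -/
/-!
Write `ρ_{ji} = A_{ji}/m_i` and `S = ∑_j w_j q_j`. Since `∑_k m_k = 1` and `q_j = ∑_k m_k ρ_{jk}`,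
`m_i q_j - A_{ji} = m_i (∑_k m_k ρ_{jk} - ρ_{ji})` is at most `m_i · max |ρ_{jk} - ρ_{ji}|` in
absolute value. Hence `|m_i S - ∑_j w_j A_{ji}| ≤ m_i (∑_j w_j) max |ρ_{jk} - ρ_{ji}|`, and summing
over `i` gives the bound `(∑_j w_j)/S · max |ρ_{jk} - ρ_{ji}|`, where `∑_j w_j ≤ d · max w` and
`S ≥ min w`, a weighted average of `w`.
-/

open Finset

section WeightedSums

variable {ι : Type*} [Fintype ι]

theorem abs_sum_mul_le_sum_mul {w c : ι → ℝ} {M : ℝ} (hw : ∀ j, 0 ≤ w j)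
    (hc : ∀ j, |c j| ≤ M) : |∑ j, w j * c j| ≤ (∑ j, w j) * M := by
  calc |∑ j, w j * c j| ≤ ∑ j, |w j * c j| := abs_sum_le_sum_abs _ _
    _ ≤ ∑ j, w j * M := sum_le_sum fun j _ => by
        rw [abs_mul, abs_of_nonneg (hw j)]
        exact mul_le_mul_of_nonneg_left (hc j) (hw j)
    _ = (∑ j, w j) * M := (sum_mul _ _ _).symm

theorem abs_sum_mul_sub_le {p x : ι → ℝ} {y M : ℝ} (hp : ∀ k, 0 ≤ p k) (hp1 : ∑ k, p k = 1)
    (hx : ∀ k, |x k - y| ≤ M) : |∑ k, p k * x k - y| ≤ M := by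
  have hcentre : ∑ k, p k * x k - y = ∑ k, p k * (x k - y) := by
    simp only [mul_sub, sum_sub_distrib, ← sum_mul, hp1, one_mul]
  simpa only [hcentre, hp1, one_mul] using abs_sum_mul_le_sum_mul hp hx

theorem exists_le_sum_mul [Nonempty ι] (w : ι → ℝ) {q : ι → ℝ} (hq : ∀ j, 0 ≤ q j)
    (hq1 : ∑ j, q j = 1) : ∃ j₀, w j₀ ≤ ∑ j, w j * q j := by
  obtain ⟨j₀, hj₀⟩ := Finite.exists_min w
  refine ⟨j₀, ?_⟩
  calc w j₀ = ∑ j, w j₀ * q j := by rw [← mul_sum, hq1, mul_one]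
    _ ≤ ∑ j, w j * q j := sum_le_sum fun j _ => mul_le_mul_of_nonneg_right (hj₀ j) (hq j)

end WeightedSums

section Posterior

variable {ι κ : Type*} [Fintype ι] {A : κ → ι → ℝ} {m : ι → ℝ} {M : ℝ}

theorem abs_mul_sum_sub_le (hm0 : ∀ i, 0 < m i) (hm1 : ∑ i, m i = 1)
    (hM : ∀ j i k, |A j i / m i - A j k / m k| ≤ M) (j : κ) (i : ι) :
    |m i * ∑ k, A j k - A j i| ≤ m i * M := by
  have hρ : m i * ∑ k, A j k - A j i = m i * (∑ k, m k * (A j k / m k) - A j i / m i) := by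
    simp only [mul_sub, mul_div_cancel₀ _ (hm0 _).ne']
  rw [hρ, abs_mul, abs_of_pos (hm0 i)]
  exact mul_le_mul_of_nonneg_left
    (abs_sum_mul_sub_le (fun k => (hm0 k).le) hm1 fun k => hM j k i) (hm0 i).le

theorem sum_abs_sub_reweighted_le [Fintype κ] {q w : κ → ℝ} (hq : ∀ j, q j = ∑ i, A j i)
    (hm0 : ∀ i, 0 < m i) (hm1 : ∑ i, m i = 1) (hw : ∀ j, 0 ≤ w j)
    (hS : 0 < ∑ j, w j * q j) (hM : ∀ j i k, |A j i / m i - A j k / m k| ≤ M) :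
    ∑ i, |m i - (∑ j, w j * A j i) / (∑ j, w j * q j)|
      ≤ (∑ j, w j) * M / ∑ j, w j * q j := by
  set S := ∑ j, w j * q j
  have hterm : ∀ i, |m i - (∑ j, w j * A j i) / S| ≤ m i * ((∑ j, w j) * M) / S := by
    intro i
    have hsplit : m i - (∑ j, w j * A j i) / S = (∑ j, w j * (m i * q j - A j i)) / S := by
      rw [eq_div_iff hS.ne', sub_mul, div_mul_cancel₀ _ hS.ne', mul_sum, ← sum_sub_distrib]
      exact sum_congr rfl fun j _ => by ring
    rw [hsplit, abs_div, abs_of_pos hS, mul_left_comm]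
    gcongr
    simp only [hq]
    exact abs_sum_mul_le_sum_mul hw fun j => abs_mul_sum_sub_le hm0 hm1 hM j i
  calc ∑ i, |m i - (∑ j, w j * A j i) / S| ≤ ∑ i, m i * ((∑ j, w j) * M) / S :=
        sum_le_sum fun i _ => hterm i
    _ = (∑ j, w j) * M / S := by rw [← sum_div, ← sum_mul, hm1, one_mul]

end Posterior

theorem reweighted_posterior_bound_general {d : ℕ} (hd : 0 < d) (A : Fin d → Fin d → ℝ)
    (hA : ∀ j i, 0 ≤ A j i) (q m w : Fin d → ℝ)
    (hq : ∀ j, q j = ∑ i, A j i)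
    (hq1 : ∑ j, q j = 1) (hm0 : ∀ i, 0 < m i) (hm1 : ∑ i, m i = 1)
    (hw : ∀ j, 0 < w j) :
    ∑ i, |m i - (∑ j, w j * A j i) / (∑ j, w j * q j)|
      ≤ (d : ℝ) ^ 2
        * ((Finset.univ : Finset (Fin d)).sup'
            (Finset.univ_nonempty_iff.mpr (Fin.pos_iff_nonempty.mp hd)) w)
        * ((Finset.univ : Finset (Fin d)).sup'
            (Finset.univ_nonempty_iff.mpr (Fin.pos_iff_nonempty.mp hd)) (fun j => 1 / w j))
        * ((Finset.univ : Finset (Fin d × Fin d × Fin d)).sup'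
            ⟨(⟨0, hd⟩, ⟨0, hd⟩, ⟨0, hd⟩), Finset.mem_univ _⟩
            (fun x => |A x.2.1 x.1 / m x.1 - A x.2.1 x.2.2 / m x.2.2|)) := by
  have : Nonempty (Fin d) := Fin.pos_iff_nonempty.mp hd
  set W := univ.sup' _ w
  set V := univ.sup' _ fun j => 1 / w j
  set M := univ.sup' _ fun x : Fin d × Fin d × Fin d =>
    |A x.2.1 x.1 / m x.1 - A x.2.1 x.2.2 / m x.2.2|
  have hM : ∀ j i k, |A j i / m i - A j k / m k| ≤ M :=
    fun j i k => le_sup'_of_le _ (mem_univ (i, j, k)) le_rfl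
  have hq0 : ∀ j, 0 ≤ q j := fun j => hq j ▸ sum_nonneg fun i _ => hA j i
  obtain ⟨j₀, hj₀⟩ := exists_le_sum_mul w hq0 hq1
  have hS : 0 < ∑ j, w j * q j := (hw j₀).trans_le hj₀
  have hW0 : 0 ≤ W := (hw j₀).le.trans (le_sup' w (mem_univ j₀))
  have hd2 : (d : ℝ) ≤ d ^ 2 := by
    have : (1 : ℝ) ≤ d := by exact_mod_cast hd
    nlinarith
  have hW : ∑ j, w j ≤ (d : ℝ) ^ 2 * W := calc
    ∑ j, w j ≤ d * W := by
      simpa using sum_le_card_nsmul univ w W fun j _ => le_sup' w (mem_univ j)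
    _ ≤ d ^ 2 * W := by gcongr
  have hV : 1 / ∑ j, w j * q j ≤ V :=
    (one_div_le_one_div_of_le (hw j₀) hj₀).trans (le_sup' (fun j => 1 / w j) (mem_univ j₀))
  calc _ ≤ (∑ j, w j) * M / ∑ j, w j * q j :=
        sum_abs_sub_reweighted_le hq hm0 hm1 (fun j => (hw j).le) hS hM
    _ = (∑ j, w j) * (1 / ∑ j, w j * q j) * M := by ring
    _ ≤ d ^ 2 * W * V * M := by
      gcongr
      exact (abs_nonneg _).trans (hM j₀ j₀ j₀)

open Finset in
/-- Deterministic version of Lemma 2.1 / Theorem 1: with `A` nonnegative, row sums `q`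
(a probability vector), strictly positive column sums `m` (a probability vector), and
positive weights `w_j`, the reweighted posterior `π^β_i = (∑_j w_j A_{ji})/(∑_j w_j q_j)`
satisfies `∑_i |m_i − π^β_i| ≤ d²·(max_j w_j)·(max_j 1/w_j)·max_{i,j,k} |ρ_{ji} − ρ_{jk}|`
with `ρ_{ji} = A_{ji}/m_i`. -/
theorem reweighted_posterior_bound {d : ℕ} (hd : 0 < d) (A : Fin d → Fin d → ℝ)
    (hA : ∀ j i, 0 ≤ A j i) (q m w : Fin d → ℝ)
    (hq : ∀ j, q j = ∑ i, A j i) (hm : ∀ i, m i = ∑ j, A j i)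
    (hq1 : ∑ j, q j = 1) (hm0 : ∀ i, 0 < m i) (hm1 : ∑ i, m i = 1)
    (hw : ∀ j, 0 < w j) :
    ∑ i, |m i - (∑ j, w j * A j i) / (∑ j, w j * q j)|
      ≤ (d : ℝ) ^ 2
        * ((Finset.univ : Finset (Fin d)).sup'
            (Finset.univ_nonempty_iff.mpr (Fin.pos_iff_nonempty.mp hd)) w)
        * ((Finset.univ : Finset (Fin d)).sup'
            (Finset.univ_nonempty_iff.mpr (Fin.pos_iff_nonempty.mp hd)) (fun j => 1 / w j))
        * ((Finset.univ : Finset (Fin d × Fin d × Fin d)).sup'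
            ⟨(⟨0, hd⟩, ⟨0, hd⟩, ⟨0, hd⟩), Finset.mem_univ _⟩
            (fun x => |A x.2.1 x.1 / m x.1 - A x.2.1 x.2.2 / m x.2.2|)) :=
  reweighted_posterior_bound_general hd A hA q m w hq hq1 hm0 hm1 hw
end
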